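/- arXiv:1307.4145 — 4 statements merged into one kernel-verified Lean document; each statement's English description precedes it below -/
import Mathlib

section
/- Let λ_max ≥ λ₀ > λ > 0, set d = m(λ₀ − λ)/(r·‖Px̄*‖₂), let j ∈ {1,…,p} with Px̄^j ≠ 0, let ξ ∈ {+1, −1}, and set x̄ = −ξ·x̄^j. If ⟨Px̄, Px̄*⟩/(‖Px̄‖₂·‖Px̄*‖₂) ≥ d, then max_{θ ∈ A} ⟨θ, ξ·x̄^j⟩ = r·‖Px̄‖₂ − ⟨θ₀, x̄⟩. -/
/-- The dual objective `g(θ) = (1/m) Σ_i [θ_i log θ_i + (1−θ_i) log(1−θ_i)]`. -/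
noncomputable def g (m : ℕ) (θ : Fin m → ℝ) : ℝ :=
  (1 / (m : ℝ)) * ∑ i, (θ i * Real.log (θ i) + (1 - θ i) * Real.log (1 - θ i))

/-- The gradient of `g`, componentwise `(1/m) log(θ_i/(1−θ_i))`. -/
noncomputable def gradg (m : ℕ) (θ : Fin m → ℝ) : Fin m → ℝ :=
  fun i => (1 / (m : ℝ)) * Real.log (θ i / (1 - θ i))
/-- The dual feasible set `F_λ`: componentwise in `(0,1)`, `|⟨θ, x̄^j⟩| ≤ mλ` for all
columns `x̄^j = X j`, and `⟨θ, b⟩ = 0`. -/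
def Feas (m p : ℕ) (X : Fin p → Fin m → ℝ) (b : Fin m → ℝ) (lam : ℝ) :
    Set (Fin m → ℝ) :=
  {θ | (∀ i, 0 < θ i ∧ θ i < 1) ∧ (∀ j, |∑ i, θ i * X j i| ≤ (m : ℝ) * lam) ∧
    ∑ i, θ i * b i = 0}
open scoped Classical in
/-- `m⁺ = #{i : b_i = 1}`. -/
noncomputable def mPlus (m : ℕ) (b : Fin m → ℝ) : ℕ :=
  (Finset.univ.filter (fun i => b i = 1)).card

open scoped Classical in
/-- `m⁻ = #{i : b_i = −1}`. -/
noncomputable def mMinus (m : ℕ) (b : Fin m → ℝ) : ℕ :=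
  (Finset.univ.filter (fun i => b i = -1)).card

open scoped Classical in
/-- `θ_max`, with `(θ_max)_i = m⁻/m` if `b_i = 1` and `m⁺/m` if `b_i = −1`. -/
noncomputable def thetaMax (m : ℕ) (b : Fin m → ℝ) : Fin m → ℝ :=
  fun i => if b i = 1 then (mMinus m b : ℝ) / m else (mPlus m b : ℝ) / m

/-- `λ_max = (1/m) max_j |⟨θ_max, x̄^j⟩|`. -/
noncomputable def lamMax (m p : ℕ) (X : Fin p → Fin m → ℝ) (b : Fin m → ℝ) : ℝ :=
  (1 / (m : ℝ)) * ⨆ j : Fin p, |∑ i, thetaMax m b i * X j i|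
/-- `P`, the orthogonal projection onto the orthogonal complement of `b`:
`Pv = v − (⟨v,b⟩/‖b‖₂²) b`. -/
noncomputable def Pb (m : ℕ) (b : Fin m → ℝ) (v : Fin m → ℝ) : Fin m → ℝ :=
  fun i => v i - ((∑ k, v k * b k) / (∑ k, (b k) ^ 2)) * b i

/-- Theorem 8(a): with `d = m(λ₀ − λ)/(r‖Px̄*‖₂)`, if
`⟨Px̄, Px̄*⟩/(‖Px̄‖₂‖Px̄*‖₂) ≥ d`, then
`max_{θ ∈ A} ⟨θ, ξx̄^j⟩ = r‖Px̄‖₂ − ⟨θ₀, x̄⟩`. -/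
theorem slores_upper_bound_case_a
 (m p : ℕ) (hm : 1 ≤ m) (hp : 1 ≤ p)
    (X : Fin p → Fin m → ℝ) (b : Fin m → ℝ) (hb : ∀ i, b i = 1 ∨ b i = -1)
    (hmp : 1 ≤ mPlus m b) (hmm : 1 ≤ mMinus m b) (hlmax : 0 < lamMax m p X b)
    (lam lam₀ : ℝ) (hlam : 0 < lam) (hll : lam < lam₀) (hle : lam₀ ≤ lamMax m p X b)
    (θ₀ : Fin m → ℝ)
    (hθ₀ : θ₀ ∈ Feas m p X b lam₀ ∧ ∀ θ ∈ Feas m p X b lam₀, g m θ₀ ≤ g m θ)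
    (r : ℝ)
    (hr : r = Real.sqrt (((m : ℝ) / 2) * (g m (fun i => (lam / lam₀) * θ₀ i) - g m θ₀
      + (1 - lam / lam₀) * ∑ i, gradg m θ₀ i * θ₀ i)))
    (j₀ : Fin p) (hj₀ : |∑ i, θ₀ i * X j₀ i| = (m : ℝ) * lam₀)
    (xstar : Fin m → ℝ)
    (hxstar : xstar = fun i => Real.sign (∑ k, θ₀ k * X j₀ k) * X j₀ i)
    (A : Set (Fin m → ℝ))
    (hA : A = {θ | ∑ i, (θ i - θ₀ i) ^ 2 ≤ r ^ 2 ∧ ∑ i, θ i * b i = 0 ∧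
      ∑ i, θ i * xstar i ≤ (m : ℝ) * lam})
    (hPxs : Pb m b xstar ≠ 0)
    (j : Fin p) (hPj : Pb m b (X j) ≠ 0)
    (ξ : ℝ) (hξ : ξ = 1 ∨ ξ = -1)
    (xbar : Fin m → ℝ) (hxbar : xbar = fun i => -ξ * X j i)
    (hr0 : 0 < r)
    (d : ℝ) (hd : d = (m : ℝ) * (lam₀ - lam) / (r * Real.sqrt (∑ i, (Pb m b xstar i) ^ 2)))
    (hcos : d ≤ (∑ i, Pb m b xbar i * Pb m b xstar i) /
        (Real.sqrt (∑ i, (Pb m b xbar i) ^ 2) * Real.sqrt (∑ i, (Pb m b xstar i) ^ 2))) :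
    IsGreatest ((fun θ => ∑ i, θ i * (ξ * X j i)) '' A)
      (r * Real.sqrt (∑ i, (Pb m b xbar i) ^ 2) - ∑ i, θ₀ i * xbar i) := by
  classical
  obtain ⟨⟨hθ₀pos, hθ₀feas, hθ₀b⟩, -⟩ := hθ₀
  have hm0 : (0:ℝ) < m := by
    have : (1:ℝ) ≤ (m:ℝ) := by exact_mod_cast hm
    linarith
  have hlam₀ : 0 < lam₀ := lt_trans hlam hll
  have hS : (∑ k, (b k)^2) = (m:ℝ) := by
    have h1 : ∀ k : Fin m, (b k)^2 = 1 := by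
      intro k; rcases hb k with h|h <;> rw [h] <;> norm_num
    simp [h1]
  have hSne : (∑ k, (b k)^2) ≠ 0 := by rw [hS]; exact ne_of_gt hm0
  -- projection kills b
  have hPb_b : ∀ v : Fin m → ℝ, ∑ i, Pb m b v i * b i = 0 := by
    intro v
    have h1 : ∀ i : Fin m, Pb m b v i * b i
        = v i * b i - ((∑ k, v k * b k) / (∑ k, (b k)^2)) * (b i)^2 := by
      intro i; simp only [Pb]; ring
    rw [Finset.sum_congr rfl fun i _ => h1 i, Finset.sum_sub_distrib, ← Finset.mul_sum,
      div_mul_cancel₀ _ hSne, sub_self]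
  have hPb_inner : ∀ v w : Fin m → ℝ,
      ∑ i, Pb m b v i * w i = ∑ i, Pb m b v i * Pb m b w i := by
    intro v w
    have h1 : ∀ i : Fin m, Pb m b v i * Pb m b w i
        = Pb m b v i * w i - ((∑ k, w k * b k) / (∑ k, (b k)^2)) * (Pb m b v i * b i) := by
      intro i; simp only [Pb]; ring
    rw [Finset.sum_congr rfl fun i _ => h1 i, Finset.sum_sub_distrib, ← Finset.mul_sum,
      hPb_b v, mul_zero, sub_zero]
  set Pxb := Pb m b xbar with hPxbdef
  set Pxs := Pb m b xstar with hPxsdef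
  -- Pxb ≠ 0
  have hξ0 : ξ ≠ 0 := by rcases hξ with h|h <;> rw [h] <;> norm_num
  have hPxb_eq : ∀ i, Pxb i = -ξ * Pb m b (X j) i := by
    intro i
    simp only [hPxbdef, Pb, hxbar]
    rw [show (∑ k, -ξ * X j k * b k) = -ξ * ∑ k, X j k * b k by
      rw [Finset.mul_sum]; exact Finset.sum_congr rfl fun k _ => by ring]
    ring
  obtain ⟨i0, hi0⟩ := Function.ne_iff.mp hPj
  simp only [Pi.zero_apply] at hi0
  have hPxb_i0 : Pxb i0 ≠ 0 := by
    rw [hPxb_eq i0]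
    exact mul_ne_zero (neg_ne_zero.mpr hξ0) hi0
  obtain ⟨i1, hi1⟩ := Function.ne_iff.mp hPxs
  simp only [Pi.zero_apply] at hi1
  have hnb2 : 0 < ∑ i, Pxb i ^ 2 :=
    Finset.sum_pos' (fun i _ => sq_nonneg _) ⟨i0, Finset.mem_univ _, by positivity⟩
  have hns2 : 0 < ∑ i, Pxs i ^ 2 :=
    Finset.sum_pos' (fun i _ => sq_nonneg _) ⟨i1, Finset.mem_univ _, by positivity⟩
  set nb := Real.sqrt (∑ i, Pxb i ^ 2) with hnbdef
  set ns := Real.sqrt (∑ i, Pxs i ^ 2) with hnsdef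
  have hnb : 0 < nb := Real.sqrt_pos.mpr hnb2
  have hns : 0 < ns := Real.sqrt_pos.mpr hns2
  have hnbsq : nb ^ 2 = ∑ i, Pxb i ^ 2 := Real.sq_sqrt hnb2.le
  -- ⟨θ₀, x*⟩ = m λ₀
  have hθ₀xs : ∑ i, θ₀ i * xstar i = (m:ℝ) * lam₀ := by
    have hval : ∑ i, θ₀ i * xstar i
        = Real.sign (∑ k, θ₀ k * X j₀ k) * ∑ k, θ₀ k * X j₀ k := by
      rw [hxstar, Finset.mul_sum]
      exact Finset.sum_congr rfl fun k _ => by ring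
    have hs0 : (∑ k, θ₀ k * X j₀ k) ≠ 0 := by
      intro h
      rw [h, abs_zero] at hj₀
      nlinarith
    rcases hs0.lt_or_gt with h|h
    · rw [hval, Real.sign_of_neg h, ← hj₀, abs_of_neg h]; ring
    · rw [hval, Real.sign_of_pos h, ← hj₀, abs_of_pos h]; ring
  -- the inner product bound from hcos
  have hI : (m:ℝ) * (lam₀ - lam) * nb / r ≤ ∑ i, Pxb i * Pxs i := by
    have h1 : d * (nb * ns) ≤ ∑ i, Pxb i * Pxs i :=
      (le_div_iff₀ (by positivity)).mp hcos
    have h2 : (m:ℝ) * (lam₀ - lam) * nb / r = d * (nb * ns) := by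
      rw [hd]
      field_simp
    linarith
  -- witness
  set θs : Fin m → ℝ := fun i => θ₀ i - (r / nb) * Pxb i with hθsdef
  have hsplit : ∀ w : Fin m → ℝ,
      ∑ i, θs i * w i = ∑ i, θ₀ i * w i - (r / nb) * ∑ i, Pxb i * w i := by
    intro w
    rw [Finset.mul_sum, ← Finset.sum_sub_distrib]
    exact Finset.sum_congr rfl fun i _ => by simp only [hθsdef]; ring
  constructor
  · refine ⟨θs, ?_, ?_⟩
    · rw [hA]
      refine ⟨?_, ?_, ?_⟩
      · have : ∑ i, (θs i - θ₀ i) ^ 2 = (r / nb) ^ 2 * ∑ i, Pxb i ^ 2 := by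
          rw [Finset.mul_sum]
          exact Finset.sum_congr rfl fun i _ => by simp only [hθsdef]; ring
        rw [this, ← hnbsq]
        rw [div_pow]
        rw [div_mul_cancel₀ _ (by positivity)]
      · rw [hsplit b, hθ₀b, hPb_b xbar, mul_zero, sub_self]
      · rw [hsplit xstar, hθ₀xs, hPb_inner xbar xstar]
        have h3 : (m:ℝ) * (lam₀ - lam) ≤ (r / nb) * ∑ i, Pxb i * Pxs i := by
          have h4 := mul_le_mul_of_nonneg_left hI (le_of_lt (div_pos hr0 hnb))
          calc (m:ℝ) * (lam₀ - lam)
              = (r / nb) * ((m:ℝ) * (lam₀ - lam) * nb / r) := by field_simp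
            _ ≤ (r / nb) * ∑ i, Pxb i * Pxs i := h4
        linarith
    · show ∑ i, θs i * (ξ * X j i) = r * nb - ∑ i, θ₀ i * xbar i
      have hxx : ∀ i, ξ * X j i = -xbar i := by intro i; rw [hxbar]; ring
      have h5 : ∑ i, θs i * (ξ * X j i) = -∑ i, θs i * xbar i := by
        rw [← Finset.sum_neg_distrib]
        exact Finset.sum_congr rfl fun i _ => by rw [hxx i]; ring
      rw [h5, hsplit xbar, hPb_inner xbar xbar]
      have h7 : ∑ i, Pb m b xbar i * Pb m b xbar i = nb ^ 2 := by
        rw [hnbsq]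
        exact Finset.sum_congr rfl fun i _ => (pow_two (Pxb i)).symm
      rw [h7]
      have h6 : r / nb * nb ^ 2 = r * nb := by field_simp
      rw [h6]; ring
  · rintro y ⟨θ, hθA, rfl⟩
    show ∑ i, θ i * (ξ * X j i) ≤ r * nb - ∑ i, θ₀ i * xbar i
    rw [hA] at hθA
    obtain ⟨hball, hθb, -⟩ := hθA
    have hdb : ∑ i, (θ i - θ₀ i) * b i = 0 := by
      have h1 : ∀ i : Fin m, (θ i - θ₀ i) * b i = θ i * b i - θ₀ i * b i :=
        fun i => by ring
      rw [Finset.sum_congr rfl fun i _ => h1 i, Finset.sum_sub_distrib, hθb, hθ₀b, sub_self]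
    have hproj : ∑ i, (θ i - θ₀ i) * xbar i = ∑ i, (θ i - θ₀ i) * Pxb i := by
      have h1 : ∀ i : Fin m, (θ i - θ₀ i) * Pxb i
          = (θ i - θ₀ i) * xbar i
            - ((∑ k, xbar k * b k) / (∑ k, (b k)^2)) * ((θ i - θ₀ i) * b i) := by
        intro i; simp only [hPxbdef, Pb]; ring
      rw [eq_comm, Finset.sum_congr rfl fun i _ => h1 i, Finset.sum_sub_distrib,
        ← Finset.mul_sum, hdb, mul_zero, sub_zero]
    have hCS : ∑ i, (θ₀ i - θ i) * Pxb i ≤ r * nb := by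
      calc ∑ i, (θ₀ i - θ i) * Pxb i
          ≤ Real.sqrt (∑ i, (θ₀ i - θ i) ^ 2) * Real.sqrt (∑ i, Pxb i ^ 2) :=
            Real.sum_mul_le_sqrt_mul_sqrt _ _ _
        _ ≤ r * nb := by
            apply mul_le_mul_of_nonneg_right _ (Real.sqrt_nonneg _)
            rw [show r = Real.sqrt (r ^ 2) by rw [Real.sqrt_sq hr0.le]]
            apply Real.sqrt_le_sqrt
            calc ∑ i, (θ₀ i - θ i) ^ 2 = ∑ i, (θ i - θ₀ i) ^ 2 :=
                  Finset.sum_congr rfl fun i _ => by ring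
              _ ≤ r ^ 2 := hball
    have hdecomp : ∑ i, θ i * (ξ * X j i)
        = -∑ i, θ₀ i * xbar i - ∑ i, (θ i - θ₀ i) * xbar i := by
      rw [← Finset.sum_neg_distrib, ← Finset.sum_sub_distrib]
      exact Finset.sum_congr rfl fun i _ => by rw [hxbar]; ring
    have hneg : -∑ i, (θ i - θ₀ i) * Pxb i = ∑ i, (θ₀ i - θ i) * Pxb i := by
      rw [← Finset.sum_neg_distrib]
      exact Finset.sum_congr rfl fun i _ => by ring
    rw [hdecomp, hproj]
    linarith [hCS, hneg]
end

section
/- Let λ_max ≥ λ₀ > λ > 0, set d = m(λ₀ − λ)/(r·‖Px̄*‖₂), let j ∈ {1,…,p} with Px̄^j ≠ 0, let ξ ∈ {+1, −1}, and set x̄ = −ξ·x̄^j. If ⟨Px̄, Px̄*⟩/(‖Px̄‖₂·‖Px̄*‖₂) < d, then max_{θ ∈ A} ⟨θ, ξ·x̄^j⟩ = r·‖Px̄ + u₂*·Px̄*‖₂ − u₂*·m(λ₀ − λ) − ⟨θ₀, x̄⟩, where u₂* = (−a₁ + √Δ)/(2a₂) with a₂ = ‖Px̄*‖₂⁴·(1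 − d²), a₁ = 2·⟨Px̄, Px̄*⟩·‖Px̄*‖₂²·(1 − d²), a₀ = ⟨Px̄, Px̄*⟩² − d²·‖Px̄‖₂²·‖Px̄*‖₂², and Δ = a₁² − 4a₂a₀ = 4d²(1 − d²)·‖Px̄*‖₂⁴·(‖Px̄‖₂²·‖Px̄*‖₂² − ⟨Px̄, Px̄*⟩²). -/
open Real Set
open scoped RealInnerProductSpace
open WithLp (toLp ofLp)

lemma StrictConvexOn.add_deriv_mul_sub_lt {S : Set ℝ} {f : ℝ → ℝ} {x y f' : ℝ}
    (hf : StrictConvexOn ℝ S f) (hx : x ∈ S) (hy : y ∈ S) (hxy : y ≠ x)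
    (hf' : HasDerivAt f f' x) : f x + f' * (y - x) < f y := by
  rcases hxy.lt_or_gt with hlt | hlt
  · have := hf.slope_lt_of_hasDerivAt hy hx hlt hf'
    rw [slope_def_field, div_lt_iff₀ (sub_pos.2 hlt)] at this
    linarith
  · have := hf.lt_slope_of_hasDerivAt hx hy hlt hf'
    rw [slope_def_field, lt_div_iff₀ (sub_pos.2 hlt)] at this
    linarith

lemma strictMonoOn_log_sub_log_one_sub_sub_four_mul :
    StrictMonoOn (fun x => log x - log (1 - x) - 4 * x) (Ioo 0 1) := by
  set ψ : ℝ → ℝ := fun x => log x - log (1 - x) - 4 * x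
  have hψ : ∀ x ∈ Ioo (0 : ℝ) 1, HasDerivAt ψ ((1 - 2 * x) ^ 2 / (x * (1 - x))) x := by
    rintro x ⟨hx₀, hx₁⟩
    refine (((hasDerivAt_log hx₀.ne').sub ((hasDerivAt_log (sub_pos.2 hx₁).ne').comp x
      ((hasDerivAt_id x).const_sub 1))).sub ((hasDerivAt_id x).const_mul 4)).congr_deriv ?_
    field_simp [(sub_pos.2 hx₁).ne']
    ring
  -- `ψ'` vanishes at `1/2` only, so `ψ` is strictly monotone on either side of it.
  have mono : ∀ s ⊆ Ioo (0 : ℝ) 1, Convex ℝ s → (∀ x ∈ interior s, x ≠ 1 / 2) →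
      StrictMonoOn ψ s := fun s hs hconv hne =>
    strictMonoOn_of_deriv_pos hconv (fun x hx => (hψ x (hs hx)).continuousAt.continuousWithinAt)
      fun x hx => by
        obtain ⟨hx₀, hx₁⟩ := hs (interior_subset hx)
        rw [(hψ x ⟨hx₀, hx₁⟩).deriv]
        have : 1 - 2 * x ≠ 0 := fun h => hne x hx (by linarith)
        have : 0 < 1 - x := sub_pos.2 hx₁
        positivity
  have h₁ := mono (Ioc 0 (1 / 2)) (fun x hx => ⟨hx.1, by linarith [hx.2]⟩) (convex_Ioc _ _)
    (by simp only [interior_Ioc]; exact fun x hx => hx.2.ne)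
  have h₂ := mono (Ico (1 / 2) 1) (fun x hx => ⟨by linarith [hx.1], hx.2⟩) (convex_Ico _ _)
    (by simp only [interior_Ico]; exact fun x hx => hx.1.ne')
  have := h₁.union h₂ (isGreatest_Ioc (by norm_num)) (isLeast_Ico (by norm_num))
  rwa [Ioc_union_Ico_eq_Ioo (by norm_num) (by norm_num)] at this

lemma hasDerivAt_neg_binEntropy_sub_two_mul_sq {x : ℝ} (hx : x ∈ Ioo 0 1) :
    HasDerivAt (fun x => -binEntropy x - 2 * x ^ 2) (log x - log (1 - x) - 4 * x) x :=
  ((hasDerivAt_binEntropy hx.1.ne' hx.2.ne).neg.sub ((hasDerivAt_pow 2 x).const_mul 2)).congr_deriv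
    (by ring)

lemma strictConvexOn_neg_binEntropy_sub_two_mul_sq :
    StrictConvexOn ℝ (Ioo 0 1) (fun x => -binEntropy x - 2 * x ^ 2) := by
  refine StrictMonoOn.strictConvexOn_of_deriv (convex_Ioo 0 1)
    (fun x hx => (hasDerivAt_neg_binEntropy_sub_two_mul_sq hx).continuousAt.continuousWithinAt) ?_
  rw [interior_Ioo]
  exact strictMonoOn_log_sub_log_one_sub_sub_four_mul.congr fun x hx =>
    (hasDerivAt_neg_binEntropy_sub_two_mul_sq hx).deriv.symm

/-- Pinsker's inequality for Bernoulli distributions, in strict form. -/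
lemma two_mul_sq_sub_lt_binEntropy_sub {s t : ℝ} (hs : s ∈ Ioo 0 1) (ht : t ∈ Ioo 0 1)
    (hst : s ≠ t) :
    2 * (s - t) ^ 2 < binEntropy t - binEntropy s - log (t / (1 - t)) * (s - t) := by
  have h := strictConvexOn_neg_binEntropy_sub_two_mul_sq.add_deriv_mul_sub_lt ht hs hst
    (hasDerivAt_neg_binEntropy_sub_two_mul_sq ht)
  rw [log_div ht.1.ne' (sub_pos.2 ht.2).ne']
  linear_combination h

lemma two_mul_sum_sq_sub_lt_bregman_g {m : ℕ} {s t : Fin m → ℝ} (hs : ∀ i, s i ∈ Ioo 0 1)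
    (ht : ∀ i, t i ∈ Ioo 0 1) (hst : s ≠ t) :
    2 * ∑ i, (s i - t i) ^ 2 < m * (g m s - g m t - ∑ i, gradg m t i * (s i - t i)) := by
  obtain ⟨i₀, hi₀⟩ := Function.ne_iff.1 hst
  have hm : (m : ℝ) ≠ 0 := Nat.cast_ne_zero.2 (Fin.pos i₀).ne'
  have hneg : ∀ p, p * log p + (1 - p) * log (1 - p) = -binEntropy p := fun p => by
    simp only [binEntropy, log_inv]; ring
  have hbregman : m * (g m s - g m t - ∑ i, gradg m t i * (s i - t i)) =
      ∑ i, (binEntropy (t i) - binEntropy (s i) - log (t i / (1 - t i)) * (s i - t i)) := by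
    simp only [g, gradg, hneg, Finset.sum_sub_distrib, Finset.sum_neg_distrib, mul_assoc,
      ← Finset.mul_sum]
    field_simp
    ring
  rw [hbregman, Finset.mul_sum]
  refine Finset.sum_lt_sum (fun i _ => ?_) ⟨i₀, Finset.mem_univ _, ?_⟩
  · rcases eq_or_ne (s i) (t i) with h | h
    · simp [h]
    · exact (two_mul_sq_sub_lt_binEntropy_sub (hs i) (ht i) h).le
  · exact two_mul_sq_sub_lt_binEntropy_sub (hs i₀) (ht i₀) hi₀

lemma sum_sq_pos_of_ne_zero {ι : Type*} [Fintype ι] {v : ι → ℝ} (hv : v ≠ 0) :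
    0 < ∑ i, v i ^ 2 := by
  obtain ⟨i, hi⟩ := Function.ne_iff.1 hv
  exact Finset.sum_pos' (fun j _ => sq_nonneg (v j)) ⟨i, Finset.mem_univ i, sq_pos_of_ne_zero hi⟩

lemma sum_mul_sign_mul {ι : Type*} [Fintype ι] (θ x : ι → ℝ) :
    ∑ i, θ i * (Real.sign (∑ k, θ k * x k) * x i) = |∑ k, θ k * x k| := by
  simp only [mul_left_comm (θ _), ← Finset.mul_sum]
  rcases lt_trichotomy (∑ k, θ k * x k) 0 with h | h | h
  · rw [sign_of_neg h, abs_of_neg h]; ring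
  · simp [h]
  · rw [sign_of_pos h, abs_of_pos h]; ring

lemma sum_Pb_mul {m : ℕ} (b v : Fin m → ℝ) : ∑ i, Pb m b v i * b i = 0 := by
  rcases eq_or_ne (∑ k, b k ^ 2) 0 with hb | hb
  · have : ∀ i, b i = 0 := fun i =>
      pow_eq_zero_iff two_ne_zero |>.1 ((Finset.sum_eq_zero_iff_of_nonneg fun k _ =>
        sq_nonneg (b k)).1 hb i (Finset.mem_univ i))
    simp [this]
  · simp only [Pb, sub_mul, Finset.sum_sub_distrib, mul_assoc, ← Finset.mul_sum, ← sq]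
    field_simp
    ring

lemma sum_mul_Pb {m : ℕ} {b w : Fin m → ℝ} (hw : ∑ i, w i * b i = 0) (v : Fin m → ℝ) :
    ∑ i, w i * Pb m b v i = ∑ i, w i * v i := by
  simp only [Pb, mul_sub, Finset.sum_sub_distrib, mul_left_comm (w _), ← Finset.mul_sum, hw,
    mul_zero, sub_zero]

lemma one_sub_mul_sum_mul_lt_mul_sqrt {m : ℕ} {b x θ₀ : Fin m → ℝ} {c : ℝ} (hc₀ : 0 < c)
    (hc₁ : c < 1) (hθ₀ : ∀ i, θ₀ i ∈ Ioo 0 1) (hθ₀b : ∑ i, θ₀ i * b i = 0) (hx : Pb m b x ≠ 0) :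
    (1 - c) * ∑ i, θ₀ i * x i < √((m / 2) * (g m (fun i => c * θ₀ i) - g m θ₀
      + (1 - c) * ∑ i, gradg m θ₀ i * θ₀ i)) * √(∑ i, Pb m b x i ^ 2) := by
  obtain ⟨i₀, hi₀⟩ := Function.ne_iff.1 hx
  have hs : ∀ i, c * θ₀ i ∈ Ioo 0 1 := fun i =>
    ⟨mul_pos hc₀ (hθ₀ i).1, by nlinarith [(hθ₀ i).1, (hθ₀ i).2]⟩
  have hst : (fun i => c * θ₀ i) ≠ θ₀ :=
    Function.ne_iff.2 ⟨i₀, fun h => by nlinarith [(hθ₀ i₀).1]⟩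
  have hbregman := two_mul_sum_sq_sub_lt_bregman_g hs hθ₀ hst
  have hgrad : ∑ i, gradg m θ₀ i * (c * θ₀ i - θ₀ i) =
      -((1 - c) * ∑ i, gradg m θ₀ i * θ₀ i) := by
    rw [Finset.mul_sum, ← Finset.sum_neg_distrib]
    exact Finset.sum_congr rfl fun i _ => by ring
  have hsq : ∑ i, (θ₀ i - c * θ₀ i) ^ 2 = ∑ i, (c * θ₀ i - θ₀ i) ^ 2 :=
    Finset.sum_congr rfl fun i _ => by ring
  have hperp : ∑ i, (θ₀ i - c * θ₀ i) * b i = 0 := by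
    simp only [sub_mul, mul_assoc, Finset.sum_sub_distrib, ← Finset.mul_sum, hθ₀b]; ring
  calc (1 - c) * ∑ i, θ₀ i * x i = ∑ i, (θ₀ i - c * θ₀ i) * Pb m b x i := by
        rw [sum_mul_Pb hperp, Finset.mul_sum]
        exact Finset.sum_congr rfl fun i _ => by ring
    _ ≤ √(∑ i, (θ₀ i - c * θ₀ i) ^ 2) * √(∑ i, Pb m b x i ^ 2) :=
        Real.sum_mul_le_sqrt_mul_sqrt _ _ _
    _ < _ := by
        refine mul_lt_mul_of_pos_right ?_ (Real.sqrt_pos.2 (sum_sq_pos_of_ne_zero hx))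
        rw [hsq]
        refine Real.sqrt_lt_sqrt (Finset.sum_nonneg fun i _ => sq_nonneg _) ?_
        rw [hgrad] at hbregman
        linarith

lemma larger_root_nonneg_and_add_mul_eq {Q S γ d u : ℝ} (hQ : 0 < Q) (hd₀ : 0 < d)
    (hd₁ : d < 1) (hCS : γ ^ 2 ≤ S * Q) (hcos : γ / (√S * √Q) < d)
    (hu : u = (-(2 * γ * Q * (1 - d ^ 2)) + √(4 * d ^ 2 * (1 - d ^ 2) * Q ^ 2 * (S * Q - γ ^ 2)))
      / (2 * (Q ^ 2 * (1 - d ^ 2)))) :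
    0 ≤ u ∧ γ + u * Q = d * √Q * √(S + 2 * u * γ + u ^ 2 * Q) := by
  set Δ := 4 * d ^ 2 * (1 - d ^ 2) * Q ^ 2 * (S * Q - γ ^ 2)
  have hd : 0 < 1 - d ^ 2 := by nlinarith
  have hΔ₀ : 0 ≤ Δ := by have := sub_nonneg.2 hCS; positivity
  have hsqrtΔ : (γ + u * Q) * (2 * Q * (1 - d ^ 2)) = √Δ := by
    rw [hu]; field_simp; ring
  -- the quadratic equation for `u`, rewritten as a squared complementary slackness condition
  have hsq : (γ + u * Q) ^ 2 = d ^ 2 * Q * (S + 2 * u * γ + u ^ 2 * Q) := by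
    have h : ((γ + u * Q) * (2 * Q * (1 - d ^ 2))) ^ 2 = Δ := by
      rw [hsqrtΔ, Real.sq_sqrt hΔ₀]
    refine mul_left_cancel₀ (by positivity : 4 * Q ^ 2 * (1 - d ^ 2) ≠ 0) ?_
    linear_combination h
  refine ⟨?_, ?_⟩
  · rw [hu]
    refine div_nonneg ?_ (by positivity)
    rw [neg_add_eq_sub, sub_nonneg]
    rcases le_or_gt γ 0 with hγ | hγ
    · have : 2 * γ * Q * (1 - d ^ 2) ≤ 0 := by
        have := mul_nonneg hQ.le hd.le
        nlinarith
      exact this.trans (Real.sqrt_nonneg Δ)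
    · have hS : 0 < S := by nlinarith
      have hγd : γ < d * (√S * √Q) := by rwa [div_lt_iff₀ (by positivity)] at hcos
      have hγ2 : γ ^ 2 < d ^ 2 * S * Q := by
        have := pow_lt_pow_left₀ hγd hγ.le two_ne_zero
        rwa [mul_pow, mul_pow, Real.sq_sqrt hS.le, Real.sq_sqrt hQ.le, ← mul_assoc] at this
      rw [Real.le_sqrt' (by positivity)]
      nlinarith [mul_pos (by positivity : 0 < 4 * Q ^ 2 * (1 - d ^ 2)) (sub_pos.2 hγ2)]
  · have hlhs : 0 ≤ γ + u * Q := by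
      by_contra! h
      have : (γ + u * Q) * (2 * Q * (1 - d ^ 2)) < 0 := mul_neg_of_neg_of_pos h (by positivity)
      linarith [Real.sqrt_nonneg Δ]
    have hN : 0 ≤ S + 2 * u * γ + u ^ 2 * Q := by
      by_contra! h
      nlinarith [mul_pos (mul_pos (pow_pos hd₀ 2) hQ) (neg_pos.2 h), sq_nonneg (γ + u * Q)]
    rw [← Real.sqrt_sq hlhs, hsq, Real.sqrt_mul (by positivity), Real.sqrt_mul (by positivity),
      Real.sqrt_sq hd₀.le]

section InnerProductSpace

variable {E : Type*} [NormedAddCommGroup E] [InnerProductSpace ℝ E]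

lemma neg_inner_le_of_norm_le_of_inner_le {η v c : E} {r K u : ℝ} (hη : ‖η‖ ≤ r)
    (hηc : ⟪η, c⟫ ≤ -K) (hu : 0 ≤ u) : -⟪η, v⟫ ≤ r * ‖v + u • c‖ - u * K := by
  have hsplit : -⟪η, v⟫ = ⟪-η, v + u • c⟫ + u * ⟪η, c⟫ := by
    simp only [inner_neg_left, inner_add_right, inner_smul_right]; ring
  have hcs : ⟪-η, v + u • c⟫ ≤ ‖η‖ * ‖v + u • c‖ := by
    simpa only [norm_neg] using real_inner_le_norm (-η) (v + u • c)
  nlinarith [mul_le_mul_of_nonneg_right hη (norm_nonneg (v + u • c))]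

lemma exists_mem_norm_le_inner_le_neg_inner_eq {V : Submodule ℝ E} {v c : E} {r K u : ℝ}
    (hv : v ∈ V) (hc : c ∈ V) (hc₀ : c ≠ 0) (hK : 0 ≤ K) (hKr : K ≤ r * ‖c‖)
    (hslack : r * ⟪v + u • c, c⟫ = K * ‖v + u • c‖) :
    ∃ η ∈ V, ‖η‖ ≤ r ∧ ⟪η, c⟫ ≤ -K ∧ -⟪η, v⟫ = r * ‖v + u • c‖ - u * K := by
  have hw : v + u • c ∈ V := V.add_mem hv (V.smul_mem u hc)
  have hc' : 0 < ‖c‖ := norm_pos_iff.2 hc₀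
  have hr : 0 ≤ r := nonneg_of_mul_nonneg_left (hK.trans hKr) hc'
  rcases eq_or_ne (v + u • c) 0 with hw₀ | hw₀
  · -- here `v = -u • c`, so the shortest `η` with `⟪η, c⟫ = -K` attains the value
    have hv' : v = -(u • c) := eq_neg_of_add_eq_zero_left hw₀
    refine ⟨-((K / ‖c‖ ^ 2) • c), V.neg_mem (V.smul_mem _ hc), ?_, ?_, ?_⟩
    · rw [norm_neg, norm_smul, Real.norm_of_nonneg (by positivity), div_mul_eq_mul_div, sq,
        mul_div_mul_right _ _ hc'.ne', div_le_iff₀ hc']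
      exact hKr
    · rw [inner_neg_left, real_inner_smul_left, real_inner_self_eq_norm_sq,
        div_mul_cancel₀ _ (by positivity)]
    · rw [hw₀, hv', norm_zero, inner_neg_left, inner_neg_right, real_inner_smul_left,
        inner_smul_right, real_inner_self_eq_norm_sq]
      field_simp
      ring
  · have hN : 0 < ‖v + u • c‖ := norm_pos_iff.2 hw₀
    refine ⟨-((r / ‖v + u • c‖) • (v + u • c)), V.neg_mem (V.smul_mem _ hw), ?_, ?_, ?_⟩
    · rw [norm_neg, norm_smul, Real.norm_of_nonneg (by positivity), div_mul_cancel₀ _ hN.ne']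
    · rw [inner_neg_left, real_inner_smul_left, div_mul_eq_mul_div, hslack,
        mul_div_cancel_right₀ _ hN.ne']
    · have hwv : ⟪v + u • c, v⟫ = ‖v + u • c‖ ^ 2 - u * ⟪v + u • c, c⟫ := by
        rw [← real_inner_self_eq_norm_sq]
        simp only [inner_add_right, inner_smul_right]
        ring
      rw [inner_neg_left, neg_neg, real_inner_smul_left, hwv]
      field_simp
      linear_combination -u * hslack

end InnerProductSpace

lemma sum_mul_eq_inner_toLp {ι : Type*} [Fintype ι] (v w : ι → ℝ) :
    ∑ i, v i * w i = ⟪toLp 2 v, toLp 2 w⟫ := by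
  simp [EuclideanSpace.inner_toLp_toLp, dotProduct, mul_comm]

lemma sum_sq_eq_norm_toLp_sq {ι : Type*} [Fintype ι] (v : ι → ℝ) :
    ∑ i, v i ^ 2 = ‖toLp 2 v‖ ^ 2 := by
  simp [EuclideanSpace.real_norm_sq_eq]

lemma sqrt_sum_sq_eq_norm_toLp {ι : Type*} [Fintype ι] (v : ι → ℝ) :
    √(∑ i, v i ^ 2) = ‖toLp 2 v‖ := by
  simp [EuclideanSpace.norm_eq]

lemma toLp_Pb_mem_orthogonal {m : ℕ} (b v : Fin m → ℝ) :
    toLp 2 (Pb m b v) ∈ (ℝ ∙ toLp 2 b)ᗮ := by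
  rw [Submodule.mem_orthogonal_singleton_iff_inner_left, ← sum_mul_eq_inner_toLp, sum_Pb_mul]

lemma inner_toLp_sub_toLp_Pb {m : ℕ} {b θ θ₀ : Fin m → ℝ} (hθ : ∑ i, θ i * b i = 0)
    (hθ₀ : ∑ i, θ₀ i * b i = 0) (y : Fin m → ℝ) :
    ⟪toLp 2 (θ - θ₀), toLp 2 (Pb m b y)⟫ = ∑ i, θ i * y i - ∑ i, θ₀ i * y i := by
  have hperp : ∑ i, (θ - θ₀) i * b i = 0 := by
    simp only [Pi.sub_apply, sub_mul, Finset.sum_sub_distrib, hθ, hθ₀, sub_zero]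
  rw [← sum_mul_eq_inner_toLp, sum_mul_Pb hperp, ← Finset.sum_sub_distrib]
  simp only [Pi.sub_apply, sub_mul]

section SlabProblem

variable {m : ℕ} {θ₀ b xstar xbar : Fin m → ℝ} {r K u : ℝ}

lemma neg_sum_mul_le_of_mem_slab (hθ₀b : ∑ i, θ₀ i * b i = 0) (hr : 0 ≤ r) (hu : 0 ≤ u)
    {θ : Fin m → ℝ} (hθr : ∑ i, (θ i - θ₀ i) ^ 2 ≤ r ^ 2) (hθb : ∑ i, θ i * b i = 0)
    (hθx : ∑ i, θ i * xstar i ≤ ∑ i, θ₀ i * xstar i - K) :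
    -∑ i, θ i * xbar i ≤ r * ‖toLp 2 (Pb m b xbar) + u • toLp 2 (Pb m b xstar)‖ - u * K
      - ∑ i, θ₀ i * xbar i := by
  have hη : ‖toLp 2 (θ - θ₀)‖ ≤ r := by
    rw [← sqrt_sum_sq_eq_norm_toLp, Real.sqrt_le_left hr]
    exact hθr
  have hηc : ⟪toLp 2 (θ - θ₀), toLp 2 (Pb m b xstar)⟫ ≤ -K := by
    rw [inner_toLp_sub_toLp_Pb hθb hθ₀b]; linarith
  have := neg_inner_le_of_norm_le_of_inner_le (v := toLp 2 (Pb m b xbar)) hη hηc hu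
  rw [inner_toLp_sub_toLp_Pb hθb hθ₀b] at this
  linarith

lemma exists_mem_slab_neg_sum_mul_eq (hθ₀b : ∑ i, θ₀ i * b i = 0) (hc : Pb m b xstar ≠ 0)
    (hK : 0 ≤ K) (hKr : K ≤ r * ‖toLp 2 (Pb m b xstar)‖)
    (hslack : r * ⟪toLp 2 (Pb m b xbar) + u • toLp 2 (Pb m b xstar), toLp 2 (Pb m b xstar)⟫ =
      K * ‖toLp 2 (Pb m b xbar) + u • toLp 2 (Pb m b xstar)‖) :
    ∃ θ : Fin m → ℝ, (∑ i, (θ i - θ₀ i) ^ 2 ≤ r ^ 2 ∧ ∑ i, θ i * b i = 0 ∧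
      ∑ i, θ i * xstar i ≤ ∑ i, θ₀ i * xstar i - K) ∧
      -∑ i, θ i * xbar i = r * ‖toLp 2 (Pb m b xbar) + u • toLp 2 (Pb m b xstar)‖ - u * K
        - ∑ i, θ₀ i * xbar i := by
  have hc₀ : toLp 2 (Pb m b xstar) ≠ 0 := fun h => hc (by simpa using congrArg ofLp h)
  obtain ⟨η, hηV, hη, hηc, hηv⟩ := exists_mem_norm_le_inner_le_neg_inner_eq
    (toLp_Pb_mem_orthogonal b xbar) (toLp_Pb_mem_orthogonal b xstar) hc₀ hK hKr hslack
  set θ := θ₀ + ofLp η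
  have hθη : toLp 2 (θ - θ₀) = η := by simp [θ]
  have hθb : ∑ i, θ i * b i = 0 := by
    have hηb := Submodule.mem_orthogonal_singleton_iff_inner_left.1 hηV
    rw [← WithLp.toLp_ofLp (p := 2) η, ← sum_mul_eq_inner_toLp] at hηb
    simp only [θ, Pi.add_apply, add_mul, Finset.sum_add_distrib, hθ₀b, hηb, add_zero]
  have hθx := inner_toLp_sub_toLp_Pb hθb hθ₀b xstar
  have hθx' := inner_toLp_sub_toLp_Pb hθb hθ₀b xbar
  rw [hθη] at hθx hθx'
  refine ⟨θ, ⟨?_, hθb, by linarith⟩, by linarith⟩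
  rw [show ∑ i, (θ i - θ₀ i) ^ 2 = ‖η‖ ^ 2 by rw [← hθη, ← sum_sq_eq_norm_toLp_sq]; rfl]
  exact pow_le_pow_left₀ (norm_nonneg η) hη 2

theorem isGreatest_neg_sum_mul_image_slab (hθ₀b : ∑ i, θ₀ i * b i = 0) (hc : Pb m b xstar ≠ 0)
    (hu : 0 ≤ u) (hK : 0 ≤ K) (hKr : K ≤ r * √(∑ i, Pb m b xstar i ^ 2))
    (hslack : r * (∑ i, Pb m b xbar i * Pb m b xstar i + u * ∑ i, Pb m b xstar i ^ 2) =
      K * √(∑ i, Pb m b xbar i ^ 2 + 2 * u * ∑ i, Pb m b xbar i * Pb m b xstar i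
        + u ^ 2 * ∑ i, Pb m b xstar i ^ 2)) :
    IsGreatest ((fun θ : Fin m → ℝ => -∑ i, θ i * xbar i) ''
        {θ | ∑ i, (θ i - θ₀ i) ^ 2 ≤ r ^ 2 ∧ ∑ i, θ i * b i = 0 ∧
          ∑ i, θ i * xstar i ≤ ∑ i, θ₀ i * xstar i - K})
      (r * √(∑ i, (Pb m b xbar i + u * Pb m b xstar i) ^ 2) - u * K - ∑ i, θ₀ i * xbar i) := by
  set v := toLp 2 (Pb m b xbar)
  set c := toLp 2 (Pb m b xstar)
  have hN : √(∑ i, (Pb m b xbar i + u * Pb m b xstar i) ^ 2) = ‖v + u • c‖ := by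
    rw [sqrt_sum_sq_eq_norm_toLp]; congr 1
  have hsq : ‖v + u • c‖ ^ 2 = ‖v‖ ^ 2 + 2 * u * ⟪v, c⟫ + u ^ 2 * ‖c‖ ^ 2 := by
    rw [norm_add_sq_real, norm_smul, inner_smul_right, Real.norm_eq_abs, mul_pow, sq_abs]; ring
  simp only [sum_mul_eq_inner_toLp, sum_sq_eq_norm_toLp_sq] at hslack
  rw [← hsq, Real.sqrt_sq (norm_nonneg _), ← real_inner_self_eq_norm_sq, ← real_inner_smul_left,
    ← inner_add_left] at hslack
  rw [sqrt_sum_sq_eq_norm_toLp] at hKr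
  have hr : 0 ≤ r := nonneg_of_mul_nonneg_left (hK.trans hKr) (by simpa [c] using hc)
  rw [hN]
  refine ⟨exists_mem_slab_neg_sum_mul_eq hθ₀b hc hK hKr hslack, ?_⟩
  rintro _ ⟨θ, ⟨hθr, hθb, hθx⟩, rfl⟩
  exact neg_sum_mul_le_of_mem_slab hθ₀b hr hu hθr hθb hθx

end SlabProblem

theorem slores_upper_bound_case_b_general
 (m p : ℕ) (hm : 1 ≤ m)
    (X : Fin p → Fin m → ℝ) (b : Fin m → ℝ)
    (lam lam₀ : ℝ) (hlam : 0 < lam) (hll : lam < lam₀)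
    (θ₀ : Fin m → ℝ)
    (hθ₀ : θ₀ ∈ Feas m p X b lam₀ ∧ ∀ θ ∈ Feas m p X b lam₀, g m θ₀ ≤ g m θ)
    (r : ℝ)
    (hr : r = Real.sqrt (((m : ℝ) / 2) * (g m (fun i => (lam / lam₀) * θ₀ i) - g m θ₀
      + (1 - lam / lam₀) * ∑ i, gradg m θ₀ i * θ₀ i)))
    (j₀ : Fin p) (hj₀ : |∑ i, θ₀ i * X j₀ i| = (m : ℝ) * lam₀)
    (xstar : Fin m → ℝ)
    (hxstar : xstar = fun i => Real.sign (∑ k, θ₀ k * X j₀ k) * X j₀ i)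
    (A : Set (Fin m → ℝ))
    (hA : A = {θ | ∑ i, (θ i - θ₀ i) ^ 2 ≤ r ^ 2 ∧ ∑ i, θ i * b i = 0 ∧
      ∑ i, θ i * xstar i ≤ (m : ℝ) * lam})
    (hPxs : Pb m b xstar ≠ 0)
    (j : Fin p)
    (ξ : ℝ)
    (xbar : Fin m → ℝ) (hxbar : xbar = fun i => -ξ * X j i)
    (d : ℝ) (hd : d = (m : ℝ) * (lam₀ - lam) / (r * Real.sqrt (∑ i, (Pb m b xstar i) ^ 2)))
    (hcos : (∑ i, Pb m b xbar i * Pb m b xstar i) /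
        (Real.sqrt (∑ i, (Pb m b xbar i) ^ 2) * Real.sqrt (∑ i, (Pb m b xstar i) ^ 2)) < d)
    (a₂ a₁ a₀ Δ u₂s : ℝ)
    (ha₂ : a₂ = (∑ i, (Pb m b xstar i) ^ 2) ^ 2 * (1 - d ^ 2))
    (ha₁ : a₁ = 2 * (∑ i, Pb m b xbar i * Pb m b xstar i) *
      (∑ i, (Pb m b xstar i) ^ 2) * (1 - d ^ 2))
    (ha₀ : a₀ = (∑ i, Pb m b xbar i * Pb m b xstar i) ^ 2
      - d ^ 2 * (∑ i, (Pb m b xbar i) ^ 2) * (∑ i, (Pb m b xstar i) ^ 2))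
    (hΔ : Δ = a₁ ^ 2 - 4 * a₂ * a₀)
    (hu : u₂s = (-a₁ + Real.sqrt Δ) / (2 * a₂)) :
    Δ = 4 * d ^ 2 * (1 - d ^ 2) * (∑ i, (Pb m b xstar i) ^ 2) ^ 2 *
      ((∑ i, (Pb m b xbar i) ^ 2) * (∑ i, (Pb m b xstar i) ^ 2)
        - (∑ i, Pb m b xbar i * Pb m b xstar i) ^ 2) ∧
    IsGreatest ((fun θ => ∑ i, θ i * (ξ * X j i)) '' A)
      (r * Real.sqrt (∑ i, (Pb m b xbar i + u₂s * Pb m b xstar i) ^ 2)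
        - u₂s * ((m : ℝ) * (lam₀ - lam)) - ∑ i, θ₀ i * xbar i) := by
  obtain ⟨⟨hθ₀01, -, hθ₀b⟩, -⟩ := hθ₀
  set Q := ∑ i, Pb m b xstar i ^ 2
  set S := ∑ i, Pb m b xbar i ^ 2
  set γ := ∑ i, Pb m b xbar i * Pb m b xstar i
  have hlam₀ : 0 < lam₀ := hlam.trans hll
  have hK : 0 < (m : ℝ) * (lam₀ - lam) := mul_pos (by exact_mod_cast hm) (sub_pos.2 hll)
  have hθ₀x : ∑ i, θ₀ i * xstar i = m * lam₀ := by
    rw [hxstar, ← hj₀]; exact sum_mul_sign_mul θ₀ (X j₀)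
  have hKr : (m : ℝ) * (lam₀ - lam) < r * √Q := by
    have h := one_sub_mul_sum_mul_lt_mul_sqrt (div_pos hlam hlam₀) ((div_lt_one hlam₀).2 hll)
      hθ₀01 hθ₀b hPxs
    rwa [← hr, hθ₀x, show (1 - lam / lam₀) * (m * lam₀) = m * (lam₀ - lam) by field_simp] at h
  have hdK : d * (r * √Q) = m * (lam₀ - lam) := by
    rw [hd]; exact div_mul_cancel₀ _ (hK.trans hKr).ne'
  have hd₀ : 0 < d := by rw [hd]; exact div_pos hK (hK.trans hKr)
  have hd₁ : d < 1 := by rw [hd, div_lt_one (hK.trans hKr)]; exact hKr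
  have hΔ' : Δ = 4 * d ^ 2 * (1 - d ^ 2) * Q ^ 2 * (S * Q - γ ^ 2) := by
    rw [hΔ, ha₁, ha₂, ha₀]; ring
  refine ⟨hΔ', ?_⟩
  rw [hΔ', ha₁, ha₂] at hu
  obtain ⟨hu₀, hslack⟩ := larger_root_nonneg_and_add_mul_eq (sum_sq_pos_of_ne_zero hPxs) hd₀ hd₁
    (Finset.sum_mul_sq_le_sq_mul_sq _ _ _) hcos hu
  have hobj : (fun θ : Fin m → ℝ => ∑ i, θ i * (ξ * X j i)) = fun θ => -∑ i, θ i * xbar i := by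
    funext θ
    simp only [hxbar, ← Finset.sum_neg_distrib]
    exact Finset.sum_congr rfl fun i _ => by ring
  rw [hobj, hA, show (m : ℝ) * lam = ∑ i, θ₀ i * xstar i - m * (lam₀ - lam) by rw [hθ₀x]; ring]
  exact isGreatest_neg_sum_mul_image_slab hθ₀b hPxs hu₀ hK.le hKr.le
    (by rw [hslack, ← hdK]; ring)

/-- Theorem 8(b): with `d = m(λ₀ − λ)/(r‖Px̄*‖₂)`, if
`⟨Px̄, Px̄*⟩/(‖Px̄‖₂‖Px̄*‖₂) < d`, then
`max_{θ ∈ A} ⟨θ, ξx̄^j⟩ = r‖Px̄ + u₂*Px̄*‖₂ − u₂*m(λ₀ − λ) − ⟨θ₀, x̄⟩`, where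
`u₂* = (−a₁ + √Δ)/(2a₂)` with the stated coefficients, and
`Δ = a₁² − 4a₂a₀ = 4d²(1 − d²)‖Px̄*‖₂⁴(‖Px̄‖₂²‖Px̄*‖₂² − ⟨Px̄, Px̄*⟩²)`. -/
theorem slores_upper_bound_case_b
 (m p : ℕ) (hm : 1 ≤ m) (hp : 1 ≤ p)
    (X : Fin p → Fin m → ℝ) (b : Fin m → ℝ) (hb : ∀ i, b i = 1 ∨ b i = -1)
    (hmp : 1 ≤ mPlus m b) (hmm : 1 ≤ mMinus m b) (hlmax : 0 < lamMax m p X b)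
    (lam lam₀ : ℝ) (hlam : 0 < lam) (hll : lam < lam₀) (hle : lam₀ ≤ lamMax m p X b)
    (θ₀ : Fin m → ℝ)
    (hθ₀ : θ₀ ∈ Feas m p X b lam₀ ∧ ∀ θ ∈ Feas m p X b lam₀, g m θ₀ ≤ g m θ)
    (r : ℝ)
    (hr : r = Real.sqrt (((m : ℝ) / 2) * (g m (fun i => (lam / lam₀) * θ₀ i) - g m θ₀
      + (1 - lam / lam₀) * ∑ i, gradg m θ₀ i * θ₀ i)))
    (j₀ : Fin p) (hj₀ : |∑ i, θ₀ i * X j₀ i| = (m : ℝ) * lam₀)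
    (xstar : Fin m → ℝ)
    (hxstar : xstar = fun i => Real.sign (∑ k, θ₀ k * X j₀ k) * X j₀ i)
    (A : Set (Fin m → ℝ))
    (hA : A = {θ | ∑ i, (θ i - θ₀ i) ^ 2 ≤ r ^ 2 ∧ ∑ i, θ i * b i = 0 ∧
      ∑ i, θ i * xstar i ≤ (m : ℝ) * lam})
    (hPxs : Pb m b xstar ≠ 0)
    (j : Fin p) (hPj : Pb m b (X j) ≠ 0)
    (ξ : ℝ) (hξ : ξ = 1 ∨ ξ = -1)
    (xbar : Fin m → ℝ) (hxbar : xbar = fun i => -ξ * X j i)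
    (hr0 : 0 < r)
    (d : ℝ) (hd : d = (m : ℝ) * (lam₀ - lam) / (r * Real.sqrt (∑ i, (Pb m b xstar i) ^ 2)))
    (hcos : (∑ i, Pb m b xbar i * Pb m b xstar i) /
        (Real.sqrt (∑ i, (Pb m b xbar i) ^ 2) * Real.sqrt (∑ i, (Pb m b xstar i) ^ 2)) < d)
    (a₂ a₁ a₀ Δ u₂s : ℝ)
    (ha₂ : a₂ = (∑ i, (Pb m b xstar i) ^ 2) ^ 2 * (1 - d ^ 2))
    (ha₁ : a₁ = 2 * (∑ i, Pb m b xbar i * Pb m b xstar i) *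
      (∑ i, (Pb m b xstar i) ^ 2) * (1 - d ^ 2))
    (ha₀ : a₀ = (∑ i, Pb m b xbar i * Pb m b xstar i) ^ 2
      - d ^ 2 * (∑ i, (Pb m b xbar i) ^ 2) * (∑ i, (Pb m b xstar i) ^ 2))
    (hΔ : Δ = a₁ ^ 2 - 4 * a₂ * a₀)
    (hu : u₂s = (-a₁ + Real.sqrt Δ) / (2 * a₂)) :
    Δ = 4 * d ^ 2 * (1 - d ^ 2) * (∑ i, (Pb m b xstar i) ^ 2) ^ 2 *
      ((∑ i, (Pb m b xbar i) ^ 2) * (∑ i, (Pb m b xstar i) ^ 2)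
        - (∑ i, Pb m b xbar i * Pb m b xstar i) ^ 2) ∧
    IsGreatest ((fun θ => ∑ i, θ i * (ξ * X j i)) '' A)
      (r * Real.sqrt (∑ i, (Pb m b xbar i + u₂s * Pb m b xstar i) ^ 2)
        - u₂s * ((m : ℝ) * (lam₀ - lam)) - ∑ i, θ₀ i * xbar i) :=
  slores_upper_bound_case_b_general m p hm X b lam lam₀ hlam hll θ₀ hθ₀ r hr j₀ hj₀ xstar hxstar A
    hA hPxs j ξ xbar hxbar d hd hcos a₂ a₁ a₀ Δ u₂s ha₂ ha₁ ha₀ hΔ hu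
end

section
/- Let λ_max ≥ λ₀ > λ > 0 and assume Px̄* ≠ 0 and r > 0. Then d = m(λ₀ − λ)/(r·‖Px̄*‖₂) satisfies 0 < d ≤ 1; equivalently, 0 < m(λ₀ − λ) ≤ r·‖Px̄*‖₂. -/
/-!
Put `θ = (λ/λ₀) θ₀`. Then `⟨θ, b⟩ = 0` and `⟨θ₀ - θ, x̄*⟩ = m(λ₀ - λ)`, and since `θ₀ - θ ⊥ b`
the projection `P` can be inserted: `m(λ₀ - λ) = ⟨θ₀ - θ, Px̄*⟩ ≤ ‖θ₀ - θ‖ ‖Px̄*‖` by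
Cauchy–Schwarz. The radicand of `r` is `m/2` times the Bregman divergence of `g` between `θ`
and `θ₀`, and `g` is `(4/m)`-strongly convex on `C` (coordinatewise this is Pinsker's inequality
for Bernoulli laws: `binEntropy y + 2y²` is concave on `(0,1)`), so `‖θ₀ - θ‖ ≤ r`.
-/

open Real Set

lemma Real.sign_mul_self_eq_abs (r : ℝ) : Real.sign r * r = |r| := by
  rcases lt_trichotomy r 0 with hr | rfl | hr
  · rw [Real.sign_of_neg hr, abs_of_neg hr]; ring
  · simp
  · rw [Real.sign_of_pos hr, abs_of_pos hr]; ring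

lemma sum_mul_sign_mul_eq_abs {ι : Type*} [Fintype ι] (u w : ι → ℝ) :
    ∑ i, u i * (Real.sign (∑ k, u k * w k) * w i) = |∑ k, u k * w k| := by
  rw [← Real.sign_mul_self_eq_abs, Finset.mul_sum]
  exact Finset.sum_congr rfl fun i _ => by ring

lemma sqrt_sum_sq_pos {ι : Type*} [Fintype ι] {v : ι → ℝ} (hv : v ≠ 0) :
    0 < √(∑ i, v i ^ 2) := by
  obtain ⟨i, hi⟩ := Function.ne_iff.mp hv
  exact Real.sqrt_pos.2 <|
    Finset.sum_pos' (fun j _ => sq_nonneg _) ⟨i, Finset.mem_univ i, pow_two_pos_of_ne_zero hi⟩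

lemma ConcaveOn.le_add_mul_sub_of_hasDerivAt {S : Set ℝ} {f : ℝ → ℝ} {f' x y : ℝ}
    (hf : ConcaveOn ℝ S f) (hx : x ∈ S) (hy : y ∈ S) (hfx : HasDerivAt f f' x) :
    f y ≤ f x + f' * (y - x) := by
  rcases lt_trichotomy y x with hyx | rfl | hxy
  · have h := hf.le_slope_of_hasDerivAt hy hx hyx hfx
    rw [slope_def_field, le_div_iff₀ (sub_pos.2 hyx)] at h
    linarith
  · simp
  · have h := hf.slope_le_of_hasDerivAt hx hy hxy hfx
    rw [slope_def_field, div_le_iff₀ (sub_pos.2 hxy)] at h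
    linarith

namespace Real

lemma antitoneOn_log_one_sub_sub_log_add_four_mul :
    AntitoneOn (fun y => log (1 - y) - log y + 4 * y) (Ioo 0 1) := by
  have hderiv : ∀ y ∈ Ioo (0 : ℝ) 1, HasDerivAt (fun y => log (1 - y) - log y + 4 * y)
      (-(1 - y)⁻¹ - y⁻¹ + 4) y := by
    rintro y ⟨hy0, hy1⟩
    have hlog1 := ((hasDerivAt_id' y).const_sub 1).log (sub_pos.2 hy1).ne'
    refine ((hlog1.fun_sub (hasDerivAt_log hy0.ne')).fun_add
      ((hasDerivAt_id' y).const_mul 4)).congr_deriv ?_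
    ring
  apply antitoneOn_of_deriv_nonpos (convex_Ioo 0 1)
    (fun y hy => (hderiv y hy).continuousAt.continuousWithinAt)
  · rw [interior_Ioo]
    exact fun y hy => (hderiv y hy).differentiableAt.differentiableWithinAt
  · rw [interior_Ioo]
    rintro y ⟨hy0, hy1⟩
    rw [(hderiv y ⟨hy0, hy1⟩).deriv]
    have h1y : 0 < 1 - y := sub_pos.2 hy1
    have : -(1 - y)⁻¹ - y⁻¹ + 4 = -((1 - 2 * y) ^ 2 / (y * (1 - y))) := by
      field_simp
      ring
    rw [this, neg_nonpos]
    positivity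

lemma hasDerivAt_binEntropy_add_two_mul_sq {y : ℝ} (hy : y ∈ Ioo (0 : ℝ) 1) :
    HasDerivAt (fun x => binEntropy x + 2 * x ^ 2) (log (1 - y) - log y + 4 * y) y := by
  refine ((hasDerivAt_binEntropy hy.1.ne' hy.2.ne).fun_add
    ((hasDerivAt_pow 2 y).const_mul 2)).congr_deriv ?_
  push_cast
  ring

lemma concaveOn_binEntropy_add_two_mul_sq :
    ConcaveOn ℝ (Ioo 0 1) (fun x => binEntropy x + 2 * x ^ 2) := by
  refine AntitoneOn.concaveOn_of_deriv (convex_Ioo 0 1)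
    (fun y hy => (hasDerivAt_binEntropy_add_two_mul_sq hy).continuousAt.continuousWithinAt) ?_ ?_
  · rw [interior_Ioo]
    exact fun y hy =>
      (hasDerivAt_binEntropy_add_two_mul_sq hy).differentiableAt.differentiableWithinAt
  · rw [interior_Ioo]
    refine antitoneOn_log_one_sub_sub_log_add_four_mul.congr fun y hy => ?_
    exact (hasDerivAt_binEntropy_add_two_mul_sq hy).deriv.symm

lemma binEntropy_le_add_mul_sub_sub_two_mul_sq {a c : ℝ} (ha : a ∈ Ioo (0 : ℝ) 1)
    (hc : c ∈ Ioo (0 : ℝ) 1) :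
    binEntropy a ≤ binEntropy c + (log (1 - c) - log c) * (a - c) - 2 * (a - c) ^ 2 := by
  have := concaveOn_binEntropy_add_two_mul_sq.le_add_mul_sub_of_hasDerivAt hc ha
    (hasDerivAt_binEntropy_add_two_mul_sq hc)
  linarith

end Real

lemma g_eq_neg_sum_binEntropy (m : ℕ) (θ : Fin m → ℝ) :
    g m θ = -(1 / (m : ℝ)) * ∑ i, binEntropy (θ i) := by
  simp only [g, binEntropy, log_inv]
  rw [neg_mul, ← mul_neg, ← Finset.sum_neg_distrib]
  congr 1
  exact Finset.sum_congr rfl fun i _ => by ring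

lemma sum_sq_sub_le_bregman_g {m : ℕ} (hm : 0 < m) {θ η : Fin m → ℝ}
    (hθ : ∀ i, 0 < θ i ∧ θ i < 1) (hη : ∀ i, 0 < η i ∧ η i < 1) :
    ∑ i, (θ i - η i) ^ 2 ≤ (m / 2) * (g m θ - g m η - ∑ i, gradg m η i * (θ i - η i)) := by
  have hgrad : ∀ i, gradg m η i = -(1 / (m : ℝ)) * (log (1 - η i) - log (η i)) := fun i => by
    rw [gradg, log_div (hη i).1.ne' (sub_pos.2 (hη i).2).ne']
    ring
  have hpinsker := Finset.sum_le_sum fun i (_ : i ∈ Finset.univ) =>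
    binEntropy_le_add_mul_sub_sub_two_mul_sq (hθ i) (hη i)
  simp only [Finset.sum_sub_distrib, Finset.sum_add_distrib, ← Finset.mul_sum] at hpinsker
  simp only [g_eq_neg_sum_binEntropy, hgrad, mul_assoc, ← Finset.mul_sum]
  have hm' : (0 : ℝ) < m := Nat.cast_pos.2 hm
  field_simp
  linarith

lemma sum_sq_sub_mul_le_bregman_g_mul {m : ℕ} (hm : 0 < m) {θ : Fin m → ℝ}
    (hθ : ∀ i, 0 < θ i ∧ θ i < 1) {t : ℝ} (ht₀ : 0 < t) (ht₁ : t < 1) :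
    ∑ i, (θ i - t * θ i) ^ 2
      ≤ (m / 2) * (g m (fun i => t * θ i) - g m θ + (1 - t) * ∑ i, gradg m θ i * θ i) := by
  have htθ : ∀ i, 0 < t * θ i ∧ t * θ i < 1 := fun i =>
    ⟨mul_pos ht₀ (hθ i).1, by nlinarith [hθ i]⟩
  have hlin : ∑ i, gradg m θ i * -(θ i - t * θ i) = -((1 - t) * ∑ i, gradg m θ i * θ i) := by
    simp only [Finset.mul_sum, ← Finset.sum_neg_distrib]
    exact Finset.sum_congr rfl fun i _ => by ring
  simpa only [← neg_sub (θ _), neg_sq, hlin, sub_neg_eq_add] using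
    sum_sq_sub_le_bregman_g hm htθ hθ

lemma sum_mul_Pb_of_sum_mul_eq_zero {m : ℕ} {b u : Fin m → ℝ} (hu : ∑ i, u i * b i = 0)
    (v : Fin m → ℝ) : ∑ i, u i * Pb m b v i = ∑ i, u i * v i := by
  simp only [Pb, mul_sub, Finset.sum_sub_distrib, mul_left_comm (u _), ← Finset.mul_sum, hu,
    mul_zero, sub_zero]

theorem slores_d_in_unit_interval_general
 (m p : ℕ) (hm : 1 ≤ m)
    (X : Fin p → Fin m → ℝ) (b : Fin m → ℝ)
    (lam lam₀ : ℝ) (hlam : 0 < lam) (hll : lam < lam₀)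
    (θ₀ : Fin m → ℝ)
    (hθ₀ : θ₀ ∈ Feas m p X b lam₀ ∧ ∀ θ ∈ Feas m p X b lam₀, g m θ₀ ≤ g m θ)
    (r : ℝ)
    (hr : r = Real.sqrt (((m : ℝ) / 2) * (g m (fun i => (lam / lam₀) * θ₀ i) - g m θ₀
      + (1 - lam / lam₀) * ∑ i, gradg m θ₀ i * θ₀ i)))
    (j₀ : Fin p) (hj₀ : |∑ i, θ₀ i * X j₀ i| = (m : ℝ) * lam₀)
    (xstar : Fin m → ℝ)
    (hxstar : xstar = fun i => Real.sign (∑ k, θ₀ k * X j₀ k) * X j₀ i)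
    (hPxs : Pb m b xstar ≠ 0) (hr0 : 0 < r)
    (d : ℝ) (hd : d = (m : ℝ) * (lam₀ - lam) / (r * Real.sqrt (∑ i, (Pb m b xstar i) ^ 2))) :
    0 < d ∧ d ≤ 1 := by
  obtain ⟨⟨hθ₀C, -, hθ₀b⟩, -⟩ := hθ₀
  have hlam₀ : 0 < lam₀ := hlam.trans hll
  have hscale (w : Fin m → ℝ) :
      ∑ i, (θ₀ i - lam / lam₀ * θ₀ i) * w i = (1 - lam / lam₀) * ∑ i, θ₀ i * w i := by
    rw [Finset.mul_sum]
    exact Finset.sum_congr rfl fun i _ => by ring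
  have hgap : ∑ i, (θ₀ i - lam / lam₀ * θ₀ i) * Pb m b xstar i = m * (lam₀ - lam) := by
    have hb : ∑ i, (θ₀ i - lam / lam₀ * θ₀ i) * b i = 0 := by rw [hscale, hθ₀b, mul_zero]
    rw [sum_mul_Pb_of_sum_mul_eq_zero hb, hscale, hxstar, sum_mul_sign_mul_eq_abs, hj₀]
    field_simp [hlam₀.ne']
  have hdist : √(∑ i, (θ₀ i - lam / lam₀ * θ₀ i) ^ 2) ≤ r :=
    hr ▸ Real.sqrt_le_sqrt (sum_sq_sub_mul_le_bregman_g_mul hm hθ₀C (div_pos hlam hlam₀)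
      ((div_lt_one hlam₀).2 hll))
  have hPpos := sqrt_sum_sq_pos hPxs
  have hkey : m * (lam₀ - lam) ≤ r * √(∑ i, (Pb m b xstar i) ^ 2) :=
    hgap ▸ (Real.sum_mul_le_sqrt_mul_sqrt _ _ _).trans (mul_le_mul_of_nonneg_right hdist hPpos.le)
  rw [hd, div_le_one (mul_pos hr0 hPpos)]
  exact ⟨div_pos (mul_pos (by exact_mod_cast hm) (sub_pos.2 hll)) (mul_pos hr0 hPpos), hkey⟩

/-- Lemma C: for `λ_max ≥ λ₀ > λ > 0` with `Px̄* ≠ 0` and `r > 0`, the quantity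
`d = m(λ₀ − λ)/(r‖Px̄*‖₂)` satisfies `0 < d ≤ 1`. -/
theorem slores_d_in_unit_interval
 (m p : ℕ) (hm : 1 ≤ m) (hp : 1 ≤ p)
    (X : Fin p → Fin m → ℝ) (b : Fin m → ℝ) (hb : ∀ i, b i = 1 ∨ b i = -1)
    (hmp : 1 ≤ mPlus m b) (hmm : 1 ≤ mMinus m b) (hlmax : 0 < lamMax m p X b)
    (lam lam₀ : ℝ) (hlam : 0 < lam) (hll : lam < lam₀) (hle : lam₀ ≤ lamMax m p X b)
    (θ₀ : Fin m → ℝ)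
    (hθ₀ : θ₀ ∈ Feas m p X b lam₀ ∧ ∀ θ ∈ Feas m p X b lam₀, g m θ₀ ≤ g m θ)
    (r : ℝ)
    (hr : r = Real.sqrt (((m : ℝ) / 2) * (g m (fun i => (lam / lam₀) * θ₀ i) - g m θ₀
      + (1 - lam / lam₀) * ∑ i, gradg m θ₀ i * θ₀ i)))
    (j₀ : Fin p) (hj₀ : |∑ i, θ₀ i * X j₀ i| = (m : ℝ) * lam₀)
    (xstar : Fin m → ℝ)
    (hxstar : xstar = fun i => Real.sign (∑ k, θ₀ k * X j₀ k) * X j₀ i)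
    (A : Set (Fin m → ℝ))
    (hA : A = {θ | ∑ i, (θ i - θ₀ i) ^ 2 ≤ r ^ 2 ∧ ∑ i, θ i * b i = 0 ∧
      ∑ i, θ i * xstar i ≤ (m : ℝ) * lam})
    (hPxs : Pb m b xstar ≠ 0) (hr0 : 0 < r)
    (d : ℝ) (hd : d = (m : ℝ) * (lam₀ - lam) / (r * Real.sqrt (∑ i, (Pb m b xstar i) ^ 2))) :
    0 < d ∧ d ≤ 1 :=
  slores_d_in_unit_interval_general m p hm X b lam lam₀ hlam hll θ₀ hθ₀ r hr j₀ hj₀ xstar hxstar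
    hPxs hr0 d hd
end

section
/- If λ ≥ λ_max, then the pair (β, c) = (0, log(m⁺/m⁻)) is a minimizer of LRP_λ; in particular there exists c ∈ ℝ such that (0, c) is an optimal solution of LRP_λ. -/
/-- The ℓ1-regularized logistic regression objective `LRP_λ`:
`(1/m) Σ_i log(1 + exp(−⟨β, x̄_i⟩ − b_i c)) + λ‖β‖₁`, where the rows are
`(x̄_i)_j = X j i`. -/
noncomputable def LRP (m p : ℕ) (X : Fin p → Fin m → ℝ) (b : Fin m → ℝ) (lam : ℝ)
    (β : Fin p → ℝ) (c : ℝ) : ℝ :=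
  (1 / (m : ℝ)) * ∑ i, Real.log (1 + Real.exp (-(∑ j, β j * X j i) - b i * c))
    + lam * ∑ j, |β j|

/- The optimality (KKT) conditions at `(0, c₀)`: with `θ_i = 1 / (1 + exp (b_i c₀))`, the
`c`-gradient `Σ θ_i b_i` vanishes and each `β_j`-gradient `Σ θ_i x̄_ij` lies in `[-mλ, mλ]`,
the subdifferential of `mλ|β_j|` at `0`. For `c₀ = log (m⁺/m⁻)` one gets `θ = θ_max`, so the
first condition is a counting identity and the second is `λ_max ≤ λ`. Sufficiency follows
from the tangent-line inequality for the convex loss `u ↦ log (1 + exp (-u))`. -/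

open Finset Real

theorem log_one_add_exp_neg_tangent_le (s t : ℝ) :
    log (1 + exp (-s)) - (t - s) / (1 + exp s) ≤ log (1 + exp (-t)) := by
  set w := 1 / (1 + exp s) with hw_def
  have hw : 0 ≤ w := by positivity
  have hw1 : w ≤ 1 := by rw [hw_def, div_le_one (by positivity)]; linarith [exp_pos s]
  -- `(1 + e^{-t}) / (1 + e^{-s})` is the `w`-convex combination of `1` and `e^{s-t}`.
  have hjensen : exp (w * (s - t)) ≤ (1 - w) * exp 0 + w * exp (s - t) := by
    simpa using convexOn_exp.2 (Set.mem_univ 0) (Set.mem_univ (s - t)) (sub_nonneg.2 hw1) hw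
      (sub_add_cancel 1 w)
  have hcomb : (1 - w) * exp 0 + w * exp (s - t) = (1 + exp (-t)) / (1 + exp (-s)) := by
    rw [hw_def, exp_zero, exp_sub, exp_neg, exp_neg]
    field_simp
    ring
  have hlog : w * (s - t) ≤ log (1 + exp (-t)) - log (1 + exp (-s)) := by
    rw [← log_div (by positivity) (by positivity), le_log_iff_exp_le (by positivity), ← hcomb]
    exact hjensen
  rw [div_eq_mul_one_div, ← hw_def]
  linarith

theorem sum_weighted_margin_le {m p : ℕ} (X : Fin p → Fin m → ℝ) (b w : Fin m → ℝ)
    (β : Fin p → ℝ) (c c₀ K : ℝ) (hwb : ∑ i, w i * b i = 0)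
    (hwX : ∀ j, |∑ i, w i * X j i| ≤ K) :
    ∑ i, w i * ((∑ j, β j * X j i + b i * c) - b i * c₀) ≤ K * ∑ j, |β j| := by
  have hsplit : ∑ i, w i * ((∑ j, β j * X j i + b i * c) - b i * c₀)
      = ∑ j, β j * ∑ i, w i * X j i + (c - c₀) * ∑ i, w i * b i := by
    have hi : ∀ i, w i * ((∑ j, β j * X j i + b i * c) - b i * c₀)
        = ∑ j, β j * (w i * X j i) + (c - c₀) * (w i * b i) := fun i => by
      rw [mul_sub, mul_add, mul_sum]; ring_nf
    simp only [hi, sum_add_distrib, ← mul_sum]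
    rw [sum_comm]
    simp only [mul_sum]
  calc _ = ∑ j, β j * ∑ i, w i * X j i := by rw [hsplit, hwb, mul_zero, add_zero]
    _ ≤ ∑ j, |β j| * |∑ i, w i * X j i| :=
        sum_le_sum fun j _ => (le_abs_self _).trans (abs_mul _ _).le
    _ ≤ ∑ j, |β j| * K := sum_le_sum fun j _ => mul_le_mul_of_nonneg_left (hwX j) (abs_nonneg _)
    _ = K * ∑ j, |β j| := by rw [← sum_mul, mul_comm]

theorem LRP_zero_le_of_optimality {m p : ℕ} (hm : 0 < (m : ℝ)) (X : Fin p → Fin m → ℝ)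
    (b : Fin m → ℝ) (lam c₀ : ℝ) (hc₀ : ∑ i, 1 / (1 + exp (b i * c₀)) * b i = 0)
    (hβ : ∀ j, |∑ i, 1 / (1 + exp (b i * c₀)) * X j i| ≤ m * lam) (β : Fin p → ℝ) (c : ℝ) :
    LRP m p X b lam (fun _ => 0) c₀ ≤ LRP m p X b lam β c := by
  have htangent : ∀ i, log (1 + exp (-(b i * c₀)))
      - 1 / (1 + exp (b i * c₀)) * ((∑ j, β j * X j i + b i * c) - b i * c₀)
      ≤ log (1 + exp (-(∑ j, β j * X j i) - b i * c)) := fun i => by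
    rw [← neg_add', one_div_mul_eq_div]
    exact log_one_add_exp_neg_tangent_le _ _
  have hsum := sum_le_sum fun i (_ : i ∈ univ) => htangent i
  rw [sum_sub_distrib] at hsum
  have hmargin := sum_weighted_margin_le X b _ β c c₀ _ hc₀ hβ
  simp only [LRP, zero_mul, sum_const_zero, neg_zero, zero_sub, abs_zero, mul_zero, add_zero]
  calc 1 / (m : ℝ) * ∑ i, log (1 + exp (-(b i * c₀)))
      ≤ 1 / m * (∑ i, log (1 + exp (-(∑ j, β j * X j i) - b i * c)) + m * (lam * ∑ j, |β j|)) :=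
        mul_le_mul_of_nonneg_left (by linarith [mul_assoc (m : ℝ) lam (∑ j, |β j|)]) (by positivity)
    _ = _ := by rw [mul_add, ← mul_assoc, one_div_mul_cancel hm.ne', one_mul]

section Counting

variable {m : ℕ} {b : Fin m → ℝ}

theorem mMinus_eq_card_filter_ne_one (hb : ∀ i, b i = 1 ∨ b i = -1) :
    mMinus m b = #{i | b i ≠ 1} := by
  classical
  rw [mMinus]
  congr 1
  refine filter_congr fun i _ => ?_
  rcases hb i with h | h <;> rw [h] <;> norm_num

theorem mPlus_add_mMinus (hb : ∀ i, b i = 1 ∨ b i = -1) : mPlus m b + mMinus m b = m := by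
  classical
  rw [mMinus_eq_card_filter_ne_one hb, mPlus]
  simpa using card_filter_add_card_filter_not (s := univ) (fun i => b i = 1)

theorem sum_thetaMax_mul_self_eq_zero (hb : ∀ i, b i = 1 ∨ b i = -1) :
    ∑ i, thetaMax m b i * b i = 0 := by
  classical
  have hterm : ∀ i, thetaMax m b i * b i
      = if b i = 1 then (mMinus m b : ℝ) / m else -((mPlus m b : ℝ) / m) := fun i => by
    rcases hb i with h | h
    · simp [thetaMax, h]
    · simp [thetaMax, h, if_neg (show (-1 : ℝ) ≠ 1 by norm_num)]
  simp only [hterm, sum_ite, sum_const, nsmul_eq_mul, ← mMinus_eq_card_filter_ne_one hb]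
  rw [mPlus]
  ring

theorem thetaMax_eq_one_div_one_add_exp (hb : ∀ i, b i = 1 ∨ b i = -1)
    (hmp : 1 ≤ mPlus m b) (hmm : 1 ≤ mMinus m b) (i : Fin m) :
    thetaMax m b i = 1 / (1 + exp (b i * log ((mPlus m b : ℝ) / mMinus m b))) := by
  have hP : (0 : ℝ) < mPlus m b := by exact_mod_cast hmp
  have hM : (0 : ℝ) < mMinus m b := by exact_mod_cast hmm
  have hm : (mPlus m b : ℝ) + mMinus m b = m := by exact_mod_cast mPlus_add_mMinus hb
  rcases hb i with h | h
  · rw [h, one_mul, exp_log (div_pos hP hM)]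
    simp only [thetaMax, h, if_true]
    rw [← hm]
    field_simp
    ring
  · rw [h, neg_one_mul, exp_neg, exp_log (div_pos hP hM)]
    simp only [thetaMax, h, if_neg (by norm_num : (-1 : ℝ) ≠ 1)]
    rw [← hm]
    field_simp

end Counting

theorem abs_sum_thetaMax_mul_le {m p : ℕ} (hm : (m : ℝ) ≠ 0) (X : Fin p → Fin m → ℝ)
    (b : Fin m → ℝ) (j : Fin p) : |∑ i, thetaMax m b i * X j i| ≤ m * lamMax m p X b := by
  rw [lamMax, ← mul_assoc, mul_one_div_cancel hm, one_mul]
  exact le_ciSup (f := fun j => |∑ i, thetaMax m b i * X j i|) (Set.finite_range _).bddAbove j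

theorem slores_zero_solution_general (m p : ℕ) (hm : 1 ≤ m)
    (X : Fin p → Fin m → ℝ) (b : Fin m → ℝ) (hb : ∀ i, b i = 1 ∨ b i = -1)
    (hmp : 1 ≤ mPlus m b) (hmm : 1 ≤ mMinus m b)
    (lam : ℝ) (hlam : lamMax m p X b ≤ lam) :
    (∀ β c, LRP m p X b lam (fun _ => 0) (Real.log ((mPlus m b : ℝ) / (mMinus m b : ℝ)))
        ≤ LRP m p X b lam β c) ∧
    ∃ c : ℝ, ∀ β' c', LRP m p X b lam (fun _ => 0) c ≤ LRP m p X b lam β' c' := by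
  have hm_pos : (0 : ℝ) < m := by exact_mod_cast hm
  have hθ := thetaMax_eq_one_div_one_add_exp hb hmp hmm
  have optimal := LRP_zero_le_of_optimality hm_pos X b lam _
    (by simpa only [hθ] using sum_thetaMax_mul_self_eq_zero hb)
    (fun j => by
      simpa only [hθ] using (abs_sum_thetaMax_mul_le hm_pos.ne' X b j).trans
        (mul_le_mul_of_nonneg_left hlam hm_pos.le))
  exact ⟨optimal, _, optimal⟩

/-- If `λ ≥ λ_max`, then `(β, c) = (0, log(m⁺/m⁻))` is a minimizer of `LRP_λ`;
in particular some `(0, c)` is optimal. -/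
theorem slores_zero_solution (m p : ℕ) (hm : 1 ≤ m) (hp : 1 ≤ p)
    (X : Fin p → Fin m → ℝ) (b : Fin m → ℝ) (hb : ∀ i, b i = 1 ∨ b i = -1)
    (hmp : 1 ≤ mPlus m b) (hmm : 1 ≤ mMinus m b) (hlmax : 0 < lamMax m p X b)
    (lam : ℝ) (hlam : lamMax m p X b ≤ lam) :
    (∀ β c, LRP m p X b lam (fun _ => 0) (Real.log ((mPlus m b : ℝ) / (mMinus m b : ℝ)))
        ≤ LRP m p X b lam β c) ∧
    ∃ c : ℝ, ∀ β' c', LRP m p X b lam (fun _ => 0) c ≤ LRP m p X b lam β' c' :=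
  slores_zero_solution_general m p hm X b hb hmp hmm lam hlam
end
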